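/- Let α be a real number and let p/q be a fraction in lowest terms with q ≥ 1, p/q ≠ α, and write α − p/q = θ/q². Let p/q = [a₀; a₁, …, aₙ] be the continued fraction expansion of p/q chosen (among its two expansions) so that n is even if θ > 0 and n is odd if θ < 0, and let p′/q′ = [a₀; a₁, …, aₙ₋₁] in lowest terms. If |θ| = q/(q + q′), then α = (p + p′)/(q + q′); in particular α is rational and is the mediant of p/q and p′/q′. -/

import Mathlib

open Filter Topology

/-- Value of the finite continued fraction `[a₀; a₁, …, aₙ]`, where the partial
quotients `a₁, …, aₙ` are given as the list `l`. -/
def cfq : ℤ → List ℕ → ℚ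
  | a, [] => (a : ℚ)
  | a, b :: l => (a : ℚ) + (cfq (b : ℤ) l)⁻¹

/-- Continuants: `cfPair a₀ [a₁,…,aₙ] = ((pₙ, pₙ₋₁), (qₙ, qₙ₋₁))`, the numerators and
denominators (in lowest terms) of the last two convergents of `[a₀; a₁, …, aₙ]`,
with the usual conventions `p₋₁ = 1`, `q₋₁ = 0`. -/
def cfPair (a₀ : ℤ) (l : List ℕ) : (ℤ × ℤ) × (ℤ × ℤ) :=
  l.foldl (fun pq b => (((b : ℤ) * pq.1.1 + pq.1.2, pq.1.1), ((b : ℤ) * pq.2.1 + pq.2.2, pq.2.1)))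
    ((a₀, 1), (1, 0))

/-- The list of the first `n` terms of the sequence `a`. -/
def pref (a : ℕ → ℕ) (n : ℕ) : List ℕ := List.ofFn fun i : Fin n => a i

/-- `x` is a convergent of a continued fraction expansion of `α` (if `α` is rational this
means: a convergent of at least one of its two finite expansions; if `α` is irrational,
of its unique infinite expansion, an expansion of `α` being a continued fraction with
positive integer partial quotients whose convergents tend to `α`). -/
def IsConvergentOf (x : ℚ) (α : ℝ) : Prop :=
  (∃ (a₀ : ℤ) (l : List ℕ), (∀ b ∈ l, 0 < b) ∧ ((cfq a₀ l : ℚ) : ℝ) = α ∧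
    ∃ k, cfq a₀ (l.take k) = x) ∨
  (∃ (a₀ : ℤ) (a : ℕ → ℕ), (∀ i, 0 < a i) ∧
    Tendsto (fun n => ((cfq a₀ (pref a n) : ℚ) : ℝ)) atTop (nhds α) ∧
    ∃ n, cfq a₀ (pref a n) = x)

/-- `x'` and `x` are two consecutive convergents (in this order) of a continued fraction
expansion of `α`. -/
def ConsecConvergentsOf (x' x : ℚ) (α : ℝ) : Prop :=
  (∃ (a₀ : ℤ) (l : List ℕ), (∀ b ∈ l, 0 < b) ∧ ((cfq a₀ l : ℚ) : ℝ) = α ∧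
    ∃ k, k + 1 ≤ l.length ∧ cfq a₀ (l.take k) = x' ∧ cfq a₀ (l.take (k + 1)) = x) ∨
  (∃ (a₀ : ℤ) (a : ℕ → ℕ), (∀ i, 0 < a i) ∧
    Tendsto (fun n => ((cfq a₀ (pref a n) : ℚ) : ℝ)) atTop (nhds α) ∧
    ∃ k, cfq a₀ (pref a k) = x' ∧ cfq a₀ (pref a (k + 1)) = x)

/-- `α` admits a (finite or infinite) continued fraction expansion `[0; l, …]`
beginning with the partial quotients in `l`. -/
def cfBegins (l : List ℕ) (α : ℝ) : Prop :=
  (∃ m : List ℕ, (∀ b ∈ m, 0 < b) ∧ ((cfq 0 (l ++ m) : ℚ) : ℝ) = α) ∨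
  (∃ a : ℕ → ℕ, (∀ i, 0 < a i) ∧
    Tendsto (fun n => ((cfq 0 (l ++ pref a n) : ℚ) : ℝ)) atTop (nhds α))

/-- The cylinder `E(a₁,…,aₙ)`: all `α ∈ [0,1]` admitting a (finite or infinite)
continued fraction expansion beginning with the partial quotients `a₁, …, aₙ`. -/
def cfCylinder (l : List ℕ) : Set ℝ := {α : ℝ | α ∈ Set.Icc (0 : ℝ) 1 ∧ cfBegins l α}

/-- The Farey sequence of order `q`: all fractions in `[0,1]` whose denominator in
lowest terms is at most `q`. -/
def FareySet (q : ℕ) : Set ℚ := {x : ℚ | 0 ≤ x ∧ x ≤ 1 ∧ x.den ≤ q}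

/-- `rlo` and `rhi` are the two neighbors of `x` in the Farey sequence of order `q`. -/
def FareyNeighbors (q : ℕ) (x rlo rhi : ℚ) : Prop :=
  rlo ∈ FareySet q ∧ rhi ∈ FareySet q ∧ rlo < x ∧ x < rhi ∧
    (∀ y ∈ FareySet q, y < x → y ≤ rlo) ∧ (∀ y ∈ FareySet q, x < y → rhi ≤ y)

private def cfF (pq : (ℤ × ℤ) × (ℤ × ℤ)) (b : ℤ) : (ℤ × ℤ) × (ℤ × ℤ) :=
  ((b * pq.1.1 + pq.1.2, pq.1.1), (b * pq.2.1 + pq.2.2, pq.2.1))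

private lemma cfPair_eq (a₀ : ℤ) (l : List ℕ) :
    cfPair a₀ l = (l.map (fun b : ℕ => (b : ℤ))).foldl cfF ((a₀, 1), (1, 0)) := by
  unfold cfPair cfF
  simp [bind_pure_comp]
  rw [show (l.flatMap fun a : ℕ => [(a:ℤ)]) = l.map (fun b : ℕ => (b:ℤ)) by induction l with | nil => rfl | cons x xs ih => simp_all]

private lemma cf_foldl_lin (t : List ℤ) (s : (ℤ × ℤ) × (ℤ × ℤ)) :
    t.foldl cfF s =
    (let N := t.foldl cfF ((1, 0), (0, 1));
     ((s.1.1 * N.1.1 + s.1.2 * N.2.1, s.1.1 * N.1.2 + s.1.2 * N.2.2),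
      (s.2.1 * N.1.1 + s.2.2 * N.2.1, s.2.1 * N.1.2 + s.2.2 * N.2.2))) := by
  induction t generalizing s with
  | nil => simp
  | cons b t ih =>
    simp only [List.foldl_cons]
    rw [ih, ih (cfF ((1,0),(0,1)) b)]
    simp only [cfF]
    ext <;> dsimp <;> ring

private lemma cfPair_cons (a₀ : ℤ) (b : ℕ) (t : List ℕ) :
    cfPair a₀ (b :: t) =
      ((a₀ * (cfPair (b : ℤ) t).1.1 + (cfPair (b : ℤ) t).2.1,
        a₀ * (cfPair (b : ℤ) t).1.2 + (cfPair (b : ℤ) t).2.2),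
       ((cfPair (b : ℤ) t).1.1, (cfPair (b : ℤ) t).1.2)) := by
  rw [cfPair_eq, cfPair_eq, List.map_cons, List.foldl_cons]
  rw [cf_foldl_lin _ (cfF ((a₀, 1), (1, 0)) (b:ℤ)), cf_foldl_lin _ (((b:ℤ), 1), (1, 0))]
  simp only [cfF]
  ext <;> dsimp <;> ring

private lemma cf_key (l : List ℕ) (hl : ∀ b ∈ l, 0 < b) (a₀ : ℤ) :
    cfq a₀ l = ((cfPair a₀ l).1.1 : ℚ) / ((cfPair a₀ l).2.1 : ℚ) ∧
    1 ≤ (cfPair a₀ l).2.1 ∧ 0 ≤ (cfPair a₀ l).2.2 ∧ (cfPair a₀ l).2.2 ≤ (cfPair a₀ l).2.1 ∧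
    (cfPair a₀ l).1.1 * (cfPair a₀ l).2.2 - (cfPair a₀ l).1.2 * (cfPair a₀ l).2.1 =
      (-1) ^ (l.length + 1) ∧
    (1 ≤ a₀ → 1 ≤ (cfPair a₀ l).1.1 ∧ 0 ≤ (cfPair a₀ l).1.2 ∧
      (cfPair a₀ l).1.2 ≤ (cfPair a₀ l).1.1) := by
  induction l generalizing a₀ with
  | nil =>
    simp [cfq, cfPair]
  | cons b t ih =>
    have hb : 0 < b := hl b (by simp)
    have hb1 : (1:ℤ) ≤ (b:ℤ) := by exact_mod_cast hb
    obtain ⟨hv, hQ, hQ'0, hQ'le, hdet, hP⟩ := ih (fun x hx => hl x (by simp [hx])) (b : ℤ)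
    obtain ⟨hP1, hP'0, hP'le⟩ := hP hb1
    rw [cfPair_cons]
    set P := (cfPair (b:ℤ) t).1.1 with hPdef
    set P' := (cfPair (b:ℤ) t).1.2
    set Q := (cfPair (b:ℤ) t).2.1
    set Q' := (cfPair (b:ℤ) t).2.2
    have hPne : (P : ℚ) ≠ 0 := by exact_mod_cast (by omega : P ≠ 0)
    have hQne : (Q : ℚ) ≠ 0 := by exact_mod_cast (by omega : Q ≠ 0)
    dsimp only
    refine ⟨?_, hP1, hP'0, hP'le, ?_, ?_⟩
    · rw [show cfq a₀ (b :: t) = (a₀ : ℚ) + (cfq (b:ℤ) t)⁻¹ from rfl, hv]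
      push_cast
      field_simp
    · simp only [List.length_cons]
      have h : (a₀ * P + Q) * P' - (a₀ * P' + Q') * P = -(P * Q' - P' * Q) := by ring
      rw [h, hdet]
      ring
    · intro ha₀
      have h1 : (1:ℤ) * 1 ≤ a₀ * P := mul_le_mul ha₀ hP1 one_pos.le (by linarith)
      have h2 : (0:ℤ) ≤ a₀ * P' := mul_nonneg (by linarith) hP'0
      have h3 : a₀ * P' ≤ a₀ * P := mul_le_mul_of_nonneg_left hP'le (by linarith)
      exact ⟨by linarith, by linarith, by linarith⟩

/-- **the equality case.** With `α - p/q = θ/q²`, `p/q = [a₀; a₁, …, aₙ]`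
the expansion of `p/q` with `n` even if `θ > 0` and odd if `θ < 0`, and
`p'/q' = [a₀; a₁, …, aₙ₋₁]` its second-to-last convergent in lowest terms: if
`|θ| = q/(q + q')` then `α = (p + p')/(q + q')`, the mediant of `p/q` and `p'/q'`;
in particular `α` is rational. -/
theorem legendre_equality_case (α : ℝ) (p q : ℤ) (hq : 1 ≤ q) (hcop : IsCoprime p q)
    (hne : (p : ℝ) / (q : ℝ) ≠ α) (θ : ℝ) (hθ : α - (p : ℝ) / (q : ℝ) = θ / (q : ℝ) ^ 2)
    (a₀ : ℤ) (l : List ℕ) (hl : ∀ b ∈ l, 0 < b)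
    (hval : cfq a₀ l = (p : ℚ) / (q : ℚ))
    (hpar₁ : 0 < θ → Even l.length) (hpar₂ : θ < 0 → Odd l.length)
    (heq : |θ| = (q : ℝ) / ((q : ℝ) + ((cfPair a₀ l).2.2 : ℝ))) :
    α = ((p : ℝ) + ((cfPair a₀ l).1.2 : ℝ)) / ((q : ℝ) + ((cfPair a₀ l).2.2 : ℝ)) ∧
      ∃ r : ℚ, α = (r : ℝ) := by
  obtain ⟨hv, hQ, hQ'0, hQ'le, hdet, -⟩ := cf_key l hl a₀
  set P := (cfPair a₀ l).1.1 with hP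
  set P' := (cfPair a₀ l).1.2 with hP'
  set Q := (cfPair a₀ l).2.1 with hQdef
  set Q' := (cfPair a₀ l).2.2 with hQ'def
  have hq0 : (q : ℚ) ≠ 0 := by exact_mod_cast (by omega : q ≠ 0)
  have hQ0 : (Q : ℚ) ≠ 0 := by exact_mod_cast (by omega : Q ≠ 0)
  have hcross : P * q = p * Q := by
    have h := hval.symm.trans hv
    field_simp at h
    have h2 : p * Q = P * q := by rw [mul_comm P q]; exact_mod_cast h
    linarith
  have hPQcop : IsCoprime P Q := by
    rw [Int.isCoprime_iff_gcd_eq_one]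
    have hg : (Int.gcd P Q : ℤ) ∣ P * Q' - P' * Q :=
      dvd_sub ((Int.gcd_dvd_left P Q).mul_right Q') ((Int.gcd_dvd_right P Q).mul_left P')
    rw [hdet] at hg
    have h1 : (Int.gcd P Q : ℤ) ∣ 1 := hg.trans (isUnit_one.neg.pow _).dvd
    exact Nat.dvd_one.mp (by exact_mod_cast h1)
  have hQq : Q = q := by
    have h1 : q ∣ Q := (hcop.symm).dvd_of_dvd_mul_left ⟨P, by linarith [hcross]⟩
    have h2 : Q ∣ q := (hPQcop.symm).dvd_of_dvd_mul_left ⟨p, by linarith [hcross]⟩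
    exact Int.dvd_antisymm (by omega) (by omega) h2 h1
  have hPp : P = p := by
    have := hcross
    rw [hQq] at this
    exact mul_right_cancel₀ (by omega : q ≠ 0) this
  -- real setup
  have hqR : (0:ℝ) < (q:ℝ) := by exact_mod_cast hq
  have hQ'R : (0:ℝ) ≤ (Q':ℝ) := by exact_mod_cast hQ'0
  have hden : (0:ℝ) < (q:ℝ) + (Q':ℝ) := by linarith
  have hθne : θ ≠ 0 := by
    intro h
    apply hne
    rw [h] at hθ
    have : α - (p:ℝ)/(q:ℝ) = 0 := by rw [hθ]; simp
    linarith
  have hα : α = (p:ℝ)/(q:ℝ) + θ/(q:ℝ)^2 := by linarith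
  have key : α = ((p : ℝ) + (P' : ℝ)) / ((q : ℝ) + (Q' : ℝ)) := by
    rcases hθne.lt_or_gt with hneg | hpos
    · -- θ < 0, l.length odd, det = (-1)^(even) = 1 : p*Q' - P'*q = 1
      obtain ⟨m, hm⟩ := hpar₂ hneg
      have hd : p * Q' - P' * q = 1 := by
        rw [hPp, hQq] at hdet
        rw [hdet]
        exact Even.neg_one_pow ⟨m + 1, by omega⟩
      have hdR : (p:ℝ) * (Q':ℝ) - (P':ℝ) * (q:ℝ) = 1 := by exact_mod_cast hd
      have hθval : θ = -((q:ℝ) / ((q:ℝ) + (Q':ℝ))) := by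
        rw [abs_of_neg hneg] at heq; linarith
      rw [hα, hθval]
      field_simp
      linear_combination hdR
    · -- θ > 0, l.length even, det = (-1)^(odd) = -1 : p*Q' - P'*q = -1
      obtain ⟨m, hm⟩ := hpar₁ hpos
      have hd : p * Q' - P' * q = -1 := by
        rw [hPp, hQq] at hdet
        rw [hdet]
        exact Odd.neg_one_pow ⟨m, by omega⟩
      have hdR : (p:ℝ) * (Q':ℝ) - (P':ℝ) * (q:ℝ) = -1 := by exact_mod_cast hd
      have hθval : θ = (q:ℝ) / ((q:ℝ) + (Q':ℝ)) := by
        rw [abs_of_pos hpos] at heq; linarith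
      rw [hα, hθval]
      field_simp
      linear_combination hdR
  refine ⟨key, ⟨((p:ℚ) + (P':ℚ)) / ((q:ℚ) + (Q':ℚ)), ?_⟩⟩
  rw [key]
  push_cast
  rfl
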